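/- Let X be a universally complete f-algebra with unit e and let (x_n), (y_n) be order bounded sequences in X_+. If x_n order-converges to x, then limsup (x_n y_n) = x · limsup y_n and liminf (x_n y_n) = x · liminf y_n. -/

import Mathlib

section UCAux

variable {X : Type*} [ConditionallyCompleteLattice X] [CommRing X]
    [CovariantClass X X (· + ·) (· ≤ ·)]

lemma uc_mulm (hmul : ∀ a b : X, 0 ≤ a → 0 ≤ b → 0 ≤ a * b)
    {c a b : X} (hc : 0 ≤ c) (hab : a ≤ b) : c * a ≤ c * b := by
  have h := hmul c (b - a) hc (sub_nonneg.2 hab)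
  rw [mul_sub] at h
  exact sub_nonneg.1 h

lemma uc_mulm' (hmul : ∀ a b : X, 0 ≤ a → 0 ≤ b → 0 ≤ a * b)
    {c a b : X} (hc : 0 ≤ c) (hab : a ≤ b) : a * c ≤ b * c := by
  rw [mul_comm a c, mul_comm b c]; exact uc_mulm hmul hc hab

lemma uc_arch {h b : X} (hb : ∀ n : ℕ, n • h ≤ b) : h ≤ 0 := by
  have hbdd : BddAbove (Set.range fun n : ℕ => n • h) :=
    ⟨b, by rintro _ ⟨n, rfl⟩; exact hb n⟩
  have hlub : IsLUB (Set.range fun n : ℕ => n • h) (⨆ n : ℕ, n • h) := isLUB_ciSup hbdd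
  have h3 : (⨆ n : ℕ, n • h) ≤ (⨆ n : ℕ, n • h) - h := by
    refine hlub.2 ?_
    rintro _ ⟨n, rfl⟩
    have h2 : (n + 1) • h ≤ ⨆ n : ℕ, n • h := hlub.1 ⟨n + 1, rfl⟩
    rw [succ_nsmul] at h2
    exact le_sub_iff_add_le.2 h2
  have h4 := le_sub_iff_add_le.1 h3
  exact (add_le_iff_nonpos_right _).1 h4

lemma uc_indI (h01 : (0:X) ≤ 1) {h : X}
    (hd : ∀ n : ℕ, h ⊓ (n • h - 1) ≤ 0) : h ≤ 0 := by
  refine uc_arch (b := 1) fun n => ?_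
  induction n with
  | zero => simpa using h01
  | succ n ih =>
    have h2 : (n + 1) • h - 1 ≤ h := by
      rw [succ_nsmul]
      have h3 : n • h + h - 1 ≤ 1 + h - 1 :=
        sub_le_sub_right (add_le_add_left ih h) 1
      simpa using h3
    have h3 : (n + 1) • h - 1 ≤ 0 := (le_inf h2 le_rfl).trans (hd (n + 1))
    exact sub_nonpos.1 h3

lemma uc_disj_parts (v : X) : (v ⊔ 0) ⊓ (-v ⊔ 0) = 0 := by
  have h := posPart_inf_negPart_eq_zero v
  rwa [posPart_def, negPart_def] at h

lemma uc_semiprime (hmul : ∀ a b : X, 0 ≤ a → 0 ≤ b → 0 ≤ a * b)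
    (hfa : ∀ a b c : X, a ⊓ b = 0 → 0 ≤ c → (c * a) ⊓ b = 0)
    (h01 : (0:X) ≤ 1) {e : X} (he : 0 ≤ e) (he2 : e * e = 0) : e = 0 := by
  refine le_antisymm (uc_indI h01 fun n => ?_) he
  have hm0 : (0:X) ≤ n • e := nsmul_nonneg he n
  have hkey : (n • e ⊓ 1) * e = 0 := by
    refine le_antisymm ?_ (hmul _ _ (le_inf hm0 h01) he)
    have h1 : (n • e ⊓ 1) * e ≤ (n • e) * e := uc_mulm' hmul he inf_le_left
    rw [smul_mul_assoc, he2, smul_zero] at h1; exact h1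
  have he' : ((1 - n • e) ⊔ 0) * e = e := by
    have h3 : (1 - n • e ⊓ 1) * e = e := by rw [sub_mul, one_mul, hkey, sub_zero]
    have h4 : 1 - n • e ⊓ 1 = (1 - n • e) ⊔ 0 := by rw [sub_inf, sub_self]
    rwa [h4] at h3
  have hdisj : ((1 - n • e) ⊔ 0) ⊓ ((n • e - 1) ⊔ 0) = 0 := by
    have h := uc_disj_parts (1 - n • e)
    rwa [neg_sub] at h
  have h4 := hfa _ _ e hdisj he
  rw [mul_comm, he'] at h4
  have h5 : e ⊓ (n • e - 1) ≤ e ⊓ ((n • e - 1) ⊔ 0) := inf_le_inf_left e le_sup_left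
  exact h5.trans h4.le

lemma uc_prodzero (hmul : ∀ a b : X, 0 ≤ a → 0 ≤ b → 0 ≤ a * b)
    (hfa : ∀ a b c : X, a ⊓ b = 0 → 0 ≤ c → (c * a) ⊓ b = 0)
    (h01 : (0:X) ≤ 1) {a b : X} (ha : 0 ≤ a) (hb : 0 ≤ b) (hab : a * b = 0) :
    a ⊓ b = 0 := by
  have hm : 0 ≤ a ⊓ b := le_inf ha hb
  have h1 : (a ⊓ b) * (a ⊓ b) = 0 := by
    refine le_antisymm ?_ (hmul _ _ hm hm)
    calc (a ⊓ b) * (a ⊓ b) ≤ a * (a ⊓ b) := uc_mulm' hmul hm inf_le_left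
      _ ≤ a * b := uc_mulm hmul ha inf_le_right
      _ = 0 := hab
  exact uc_semiprime hmul hfa h01 hm h1

lemma uc_inf_add_le {a b r : X} (ha : 0 ≤ a) (hb : 0 ≤ b) (hr : 0 ≤ r) :
    r ⊓ (a + b) ≤ r ⊓ a + r ⊓ b := by
  have h1 : r ⊓ (a + b) - r ⊓ a ≤ r ⊓ b := by
    refine le_inf ((sub_le_self _ (le_inf hr ha)).trans inf_le_left) ?_
    rw [sub_inf]
    refine sup_le ?_ ?_
    · exact (sub_nonpos.2 inf_le_left).trans hb
    · exact sub_le_iff_le_add'.2 inf_le_right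
  have h2 := sub_le_iff_le_add.1 h1
  exact h2.trans_eq (add_comm _ _)

lemma uc_disj_nsmul {a r : X} (ha : 0 ≤ a) (hr : 0 ≤ r) (h : a ⊓ r = 0) :
    ∀ n : ℕ, (n • a) ⊓ r ≤ 0 := by
  intro n
  induction n with
  | zero => rw [zero_nsmul]; exact inf_le_left
  | succ n ih =>
    rw [succ_nsmul, inf_comm]
    calc r ⊓ (n • a + a) ≤ r ⊓ (n • a) + r ⊓ a := uc_inf_add_le (nsmul_nonneg ha n) ha hr
      _ ≤ 0 + 0 := by
          refine add_le_add ?_ ?_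
          · rw [inf_comm]; exact ih
          · rw [inf_comm]; exact h.le
      _ = 0 := add_zero 0

lemma uc_sup_sub (a b c : X) : (a ⊔ b) - c = (a - c) ⊔ (b - c) := by
  refine le_antisymm ?_ (sup_le (sub_le_sub_right le_sup_left c) (sub_le_sub_right le_sup_right c))
  rw [sub_le_iff_le_add]
  exact sup_le (sub_le_iff_le_add.1 le_sup_left) (sub_le_iff_le_add.1 le_sup_right)

lemma uc_lub_inf {ι : Sort*} [Nonempty ι] (f : ι → X) {s a u : X}
    (hs : IsLUB (Set.range f) s) (h : ∀ i, f i ⊓ a ≤ u) : s ⊓ a ≤ u := by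
  have key : ∀ i, f i ≤ u + ((s - a) ⊔ 0) := by
    intro i
    have h1 : f i ⊓ a + (f i ⊔ a) = f i + a := inf_add_sup _ _
    have h2 : f i ⊓ a + ((f i ⊔ a) - a) = f i := by
      rw [← add_sub_assoc, h1, add_sub_cancel_right]
    have h3 : (f i ⊔ a) - a = (f i - a) ⊔ 0 := by rw [uc_sup_sub, sub_self]
    calc f i = f i ⊓ a + ((f i - a) ⊔ 0) := by rw [← h3, h2]
      _ ≤ u + ((s - a) ⊔ 0) := by
          refine add_le_add (h i) (sup_le_sup_right ?_ 0)
          exact sub_le_sub_right (hs.1 ⟨i, rfl⟩) a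
  have h3 : s ≤ u + ((s - a) ⊔ 0) := hs.2 (by rintro _ ⟨i, rfl⟩; exact key i)
  have h4 : s - ((s - a) ⊔ 0) ≤ u := sub_le_iff_le_add.2 h3
  have h5 : s - ((s - a) ⊔ 0) = s ⊓ a := by
    rw [sub_sup, sub_sub_cancel, sub_zero, inf_comm]
  rwa [h5] at h4


set_option linter.unusedSectionVars false in
lemma uc_one_nonneg (comp : X → X)
    (hcomp : ∀ x : X, 0 ≤ x → IsLUB (Set.range fun n : ℕ => 1 ⊓ (n • x)) (comp x))
    (pinv : X → X)
    (hpinv : ∀ x : X, 0 ≤ x → 0 ≤ pinv x ∧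
      (∀ y : X, 0 ≤ y → x ⊓ y = 0 → pinv x ⊓ y = 0) ∧ x * pinv x = comp x) :
    (0:X) ≤ 1 := by
  have h1 := (hpinv 0 le_rfl).2.2
  rw [zero_mul] at h1
  have h2 := hcomp 0 le_rfl
  have h4 : comp 0 ≤ 1 ⊓ 0 := by
    refine h2.2 ?_
    rintro _ ⟨n, rfl⟩
    show 1 ⊓ n • (0:X) ≤ 1 ⊓ 0
    rw [smul_zero]
  have h5 : (0:X) ≤ 1 ⊓ 0 := h1.trans_le h4
  exact h5.trans inf_le_left

lemma uc_comp (hmul : ∀ a b : X, 0 ≤ a → 0 ≤ b → 0 ≤ a * b)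
    (hfa : ∀ a b c : X, a ⊓ b = 0 → 0 ≤ c → (c * a) ⊓ b = 0)
    (h01 : (0:X) ≤ 1) (comp : X → X)
    (hcomp : ∀ x : X, 0 ≤ x → IsLUB (Set.range fun n : ℕ => 1 ⊓ (n • x)) (comp x))
    {c : X} (hc : 0 ≤ c) :
    0 ≤ comp c ∧ comp c ≤ 1 ∧ c * comp c = c ∧ comp c * comp c = comp c := by
  have lub := hcomp c hc
  have hp0 : (0:X) ≤ comp c := by
    have h1 : (1:X) ⊓ (0 • c) ≤ comp c := lub.1 ⟨0, rfl⟩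
    rw [zero_nsmul] at h1
    exact (le_inf h01 le_rfl).trans h1
  have hp1 : comp c ≤ 1 := lub.2 (by rintro _ ⟨n, rfl⟩; exact inf_le_left)
  have hbdd : BddBelow (Set.range fun n : ℕ => c * ((1 - n • c) ⊔ 0)) :=
    ⟨0, by rintro _ ⟨n, rfl⟩; exact hmul _ _ hc le_sup_right⟩
  have hh0 : 0 ≤ ⨅ n : ℕ, c * ((1 - n • c) ⊔ 0) := le_ciInf fun n => hmul _ _ hc le_sup_right
  have hhc : (⨅ n : ℕ, c * ((1 - n • c) ⊔ 0)) ≤ c := by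
    have h1 : (⨅ n : ℕ, c * ((1 - n • c) ⊔ 0)) ≤ c * ((1 - 0 • c) ⊔ 0) := ciInf_le hbdd 0
    rw [zero_nsmul, sub_zero, sup_eq_left.2 h01, mul_one] at h1; exact h1
  have hzero : (⨅ n : ℕ, c * ((1 - n • c) ⊔ 0)) = 0 := by
    refine le_antisymm (uc_indI h01 fun n => ?_) hh0
    have hdisj : ((1 - n • c) ⊔ 0) ⊓ ((n • c - 1) ⊔ 0) = 0 := by
      have h := uc_disj_parts (1 - n • c)
      rwa [neg_sub] at h
    have h2 := hfa _ _ c hdisj hc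
    have h3 : (⨅ n : ℕ, c * ((1 - n • c) ⊔ 0)) ⊓ ((n • c - 1) ⊔ 0) ≤ 0 :=
      (inf_le_inf_right _ (ciInf_le hbdd n)).trans h2.le
    have h4 : n • (⨅ n : ℕ, c * ((1 - n • c) ⊔ 0)) - 1 ≤ (n • c - 1) ⊔ 0 :=
      (sub_le_sub_right (nsmul_le_nsmul_right hhc n) 1).trans le_sup_left
    exact (inf_le_inf_left _ h4).trans h3
  have hle : c * comp c ≤ c := by
    have h := uc_mulm hmul hc hp1; rwa [mul_one] at h
  have hge : c ≤ c * comp c := by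
    have key : ∀ n : ℕ, c - c * comp c ≤ c * ((1 - n • c) ⊔ 0) := by
      intro n
      have h5 : c * (1 ⊓ n • c) ≤ c * comp c := uc_mulm hmul hc (lub.1 ⟨n, rfl⟩)
      have h6 : c * ((1 - n • c) ⊔ 0) + c * (1 ⊓ n • c) = c := by
        rw [← mul_add]
        have e1 : (1:X) - n • c ⊓ 1 = (1 - n • c) ⊔ 0 := by rw [sub_inf, sub_self]
        have e2 : ((1 - n • c) ⊔ 0) + 1 ⊓ n • c = 1 := by
          rw [← e1, inf_comm (1:X) (n • c), sub_add_cancel]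
        rw [e2, mul_one]
      rw [sub_le_iff_le_add]
      calc c = c * ((1 - n • c) ⊔ 0) + c * (1 ⊓ n • c) := h6.symm
        _ ≤ c * ((1 - n • c) ⊔ 0) + c * comp c := add_le_add_right h5 _
    have h7 : c - c * comp c ≤ ⨅ n : ℕ, c * ((1 - n • c) ⊔ 0) := le_ciInf key
    rw [hzero] at h7; exact sub_nonpos.1 h7
  have hcm : c * comp c = c := le_antisymm hle hge
  -- component property
  have hr0 : 0 ≤ comp c ⊓ (1 - comp c) := le_inf hp0 (sub_nonneg.2 hp1)
  have hcr : c * (comp c ⊓ (1 - comp c)) = 0 := by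
    refine le_antisymm ?_ (hmul _ _ hc hr0)
    have h8 : c * (comp c ⊓ (1 - comp c)) ≤ c * (1 - comp c) := uc_mulm hmul hc inf_le_right
    rw [mul_sub, mul_one, hcm, sub_self] at h8; exact h8
  have hdisj2 : c ⊓ (comp c ⊓ (1 - comp c)) = 0 := uc_prodzero hmul hfa h01 hc hr0 hcr
  have hcomp0 : comp c ⊓ (comp c ⊓ (1 - comp c)) ≤ 0 := by
    refine uc_lub_inf _ lub fun n => ?_
    calc (1 ⊓ n • c) ⊓ (comp c ⊓ (1 - comp c)) ≤ (n • c) ⊓ (comp c ⊓ (1 - comp c)) :=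
          inf_le_inf_right _ inf_le_right
      _ ≤ 0 := uc_disj_nsmul hc hr0 hdisj2 n
  have hr : comp c ⊓ (1 - comp c) = 0 := by
    refine le_antisymm ?_ hr0
    have h9 : comp c ⊓ (comp c ⊓ (1 - comp c)) = comp c ⊓ (1 - comp c) :=
      inf_eq_right.2 inf_le_left
    rw [h9] at hcomp0; exact hcomp0
  have hq : comp c * (1 - comp c) = 0 := by
    refine le_antisymm ?_ (hmul _ _ hp0 (sub_nonneg.2 hp1))
    refine (le_inf ?_ ?_).trans hr.le
    · have h := uc_mulm hmul hp0 (sub_le_self (1:X) hp0); rwa [mul_one] at h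
    · have h := uc_mulm' hmul (sub_nonneg.2 hp1) hp1; rwa [one_mul] at h
  have hidem : comp c * comp c = comp c := by
    rw [mul_sub, mul_one] at hq
    have := sub_eq_zero.1 hq
    exact this.symm
  exact ⟨hp0, hp1, hcm, hidem⟩

lemma uc_band (hmul : ∀ a b : X, 0 ≤ a → 0 ≤ b → 0 ≤ a * b)
    {p : X} (hp0 : 0 ≤ p) (hp1 : p ≤ 1) (hpp : p * p = p)
    {ι : Sort*} [Nonempty ι] (g : ι → X) (hg : ∀ i, 0 ≤ g i) {s t : X}
    (hs : IsLUB (Set.range g) s) (ht : ∀ i, p * g i ≤ t) : p * s ≤ t := by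
  obtain ⟨i0⟩ := ‹Nonempty ι›
  have hs0 : 0 ≤ s := (hg i0).trans (hs.1 ⟨i0, rfl⟩)
  have ht0 : 0 ≤ t := (hmul _ _ hp0 (hg i0)).trans (ht i0)
  have hw0 : 0 ≤ t ⊓ (p * s) := le_inf ht0 (hmul _ _ hp0 hs0)
  have h2 : s ≤ t ⊓ (p * s) + (1 - p) * s := by
    refine hs.2 ?_
    rintro _ ⟨i, rfl⟩
    have expand : p * g i + (1 - p) * g i = g i := by ring
    calc g i = p * g i + (1 - p) * g i := expand.symm
      _ ≤ t ⊓ (p * s) + (1 - p) * s := by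
          refine add_le_add (le_inf (ht i) (uc_mulm hmul hp0 (hs.1 ⟨i, rfl⟩))) ?_
          exact uc_mulm hmul (sub_nonneg.2 hp1) (hs.1 ⟨i, rfl⟩)
  have h3 : p * s ≤ p * (t ⊓ (p * s) + (1 - p) * s) := uc_mulm hmul hp0 h2
  have h4 : p * (t ⊓ (p * s) + (1 - p) * s) = p * (t ⊓ (p * s)) + (p - p * p) * s := by
    ring
  rw [h4, hpp, sub_self, zero_mul, add_zero] at h3
  have h5 : p * (t ⊓ (p * s)) ≤ 1 * (t ⊓ (p * s)) := uc_mulm' hmul hw0 hp1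
  rw [one_mul] at h5
  exact h3.trans (h5.trans inf_le_left)

lemma uc_isLUB_mul (hmul : ∀ a b : X, 0 ≤ a → 0 ≤ b → 0 ≤ a * b)
    (hfa : ∀ a b c : X, a ⊓ b = 0 → 0 ≤ c → (c * a) ⊓ b = 0)
    (h01 : (0:X) ≤ 1) (comp : X → X)
    (hcomp : ∀ x : X, 0 ≤ x → IsLUB (Set.range fun n : ℕ => 1 ⊓ (n • x)) (comp x))
    (pinv : X → X)
    (hpinv : ∀ x : X, 0 ≤ x → 0 ≤ pinv x ∧
      (∀ y : X, 0 ≤ y → x ⊓ y = 0 → pinv x ⊓ y = 0) ∧ x * pinv x = comp x)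
    {c : X} (hc : 0 ≤ c) {ι : Sort*} [Nonempty ι] (g : ι → X) (hg : ∀ i, 0 ≤ g i)
    {s : X} (hs : IsLUB (Set.range g) s) :
    IsLUB (Set.range fun i => c * g i) (c * s) := by
  obtain ⟨hp0, hp1, hcm, hpp⟩ := uc_comp hmul hfa h01 comp hcomp hc
  obtain ⟨hw0, -, hwc⟩ := hpinv c hc
  constructor
  · rintro _ ⟨i, rfl⟩; exact uc_mulm hmul hc (hs.1 ⟨i, rfl⟩)
  · intro t ht'
    have ht : ∀ i, c * g i ≤ t := fun i => ht' ⟨i, rfl⟩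
    obtain ⟨i0⟩ := ‹Nonempty ι›
    have ht0 : 0 ≤ t := (hmul _ _ hc (hg i0)).trans (ht i0)
    have key : ∀ i, comp c * g i ≤ pinv c * t := by
      intro i
      have h1 : pinv c * (c * g i) ≤ pinv c * t := uc_mulm hmul hw0 (ht i)
      calc comp c * g i = pinv c * (c * g i) := by rw [← hwc]; ring
        _ ≤ pinv c * t := h1
    have h2 : comp c * s ≤ pinv c * t := uc_band hmul hp0 hp1 hpp g hg hs key
    have h3 : c * (comp c * s) ≤ c * (pinv c * t) := uc_mulm hmul hc h2
    have h4 : c * (comp c * s) = c * s := by rw [← mul_assoc, hcm]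
    have h5 : c * (pinv c * t) = comp c * t := by rw [← mul_assoc, hwc]
    rw [h4, h5] at h3
    have h6 : comp c * t ≤ 1 * t := uc_mulm' hmul ht0 hp1
    rw [one_mul] at h6
    exact h3.trans h6

lemma uc_isGLB_mul (hmul : ∀ a b : X, 0 ≤ a → 0 ≤ b → 0 ≤ a * b)
    (hfa : ∀ a b c : X, a ⊓ b = 0 → 0 ≤ c → (c * a) ⊓ b = 0)
    (h01 : (0:X) ≤ 1) (comp : X → X)
    (hcomp : ∀ x : X, 0 ≤ x → IsLUB (Set.range fun n : ℕ => 1 ⊓ (n • x)) (comp x))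
    (pinv : X → X)
    (hpinv : ∀ x : X, 0 ≤ x → 0 ≤ pinv x ∧
      (∀ y : X, 0 ≤ y → x ⊓ y = 0 → pinv x ⊓ y = 0) ∧ x * pinv x = comp x)
    {c : X} (hc : 0 ≤ c) {ι : Sort*} [Nonempty ι] (g : ι → X) (hg : ∀ i, 0 ≤ g i)
    {s : X} (hs : IsGLB (Set.range g) s) :
    IsGLB (Set.range fun i => c * g i) (c * s) := by
  obtain ⟨hp0, hp1, hcm, hpp⟩ := uc_comp hmul hfa h01 comp hcomp hc
  obtain ⟨hw0, -, hwc⟩ := hpinv c hc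
  have hs0 : 0 ≤ s := hs.2 (by rintro _ ⟨i, rfl⟩; exact hg i)
  constructor
  · rintro _ ⟨i, rfl⟩; exact uc_mulm hmul hc (hs.1 ⟨i, rfl⟩)
  · intro t ht'
    have ht : ∀ i, t ≤ c * g i := fun i => ht' ⟨i, rfl⟩
    obtain ⟨i0⟩ := ‹Nonempty ι›
    have main : ∀ t' : X, 0 ≤ t' → (∀ i, t' ≤ c * g i) → t' ≤ c * s := by
      intro t' ht'0 htt
      have hpt : (1 - comp c) * t' = 0 := by
        refine le_antisymm ?_ (hmul _ _ (sub_nonneg.2 hp1) ht'0)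
        have h1 : (1 - comp c) * t' ≤ (1 - comp c) * (c * g i0) :=
          uc_mulm hmul (sub_nonneg.2 hp1) (htt i0)
        have h2 : (1 - comp c) * (c * g i0) = (c - c * comp c) * g i0 := by ring
        rw [h2, hcm, sub_self, zero_mul] at h1; exact h1
      have hptt : comp c * t' = t' := by
        have h3 : comp c * t' = t' - (1 - comp c) * t' := by ring
        rw [h3, hpt, sub_zero]
      have key : ∀ i, pinv c * t' + (1 - comp c) * s ≤ g i := by
        intro i
        have h3 : pinv c * t' ≤ comp c * g i := by
          have h4 : pinv c * t' ≤ pinv c * (c * g i) := uc_mulm hmul hw0 (htt i)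
          have h5 : pinv c * (c * g i) = comp c * g i := by rw [← hwc]; ring
          rw [h5] at h4; exact h4
        have h6 : (1 - comp c) * s ≤ (1 - comp c) * g i :=
          uc_mulm hmul (sub_nonneg.2 hp1) (hs.1 ⟨i, rfl⟩)
        calc pinv c * t' + (1 - comp c) * s ≤ comp c * g i + (1 - comp c) * g i :=
              add_le_add h3 h6
          _ = g i := by ring
      have h5 : pinv c * t' + (1 - comp c) * s ≤ s :=
        hs.2 (by rintro _ ⟨i, rfl⟩; exact key i)
      have h6 : pinv c * t' ≤ comp c * s := by
        have h7 := le_sub_iff_add_le.2 h5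
        have e : s - (1 - comp c) * s = comp c * s := by ring
        rwa [e] at h7
      have h7 : c * (pinv c * t') ≤ c * (comp c * s) := uc_mulm hmul hc h6
      have h8 : c * (pinv c * t') = t' := by rw [← mul_assoc, hwc, hptt]
      have h9 : c * (comp c * s) = c * s := by rw [← mul_assoc, hcm]
      rw [h8, h9] at h7; exact h7
    have h10 : t ⊔ 0 ≤ c * s :=
      main (t ⊔ 0) le_sup_right (fun i => sup_le (ht i) (hmul _ _ hc (hg i)))
    exact le_sup_left.trans h10

end UCAux

/-- For order bounded sequences `(x_n)`, `(y_n)` of positive elements in a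
universally complete `f`-algebra with unit, if `x_n` order converges to `x`
(tail limsup = tail liminf = `x`), then
`limsup (x_n y_n) = x · limsup y_n` and `liminf (x_n y_n) = x · liminf y_n`. -/
theorem limsup_liminf_mul_of_order_convergent {X : Type*}
    [ConditionallyCompleteLattice X] [CommRing X]
    [CovariantClass X X (· + ·) (· ≤ ·)]
    (hmul : ∀ a b : X, 0 ≤ a → 0 ≤ b → 0 ≤ a * b)
    (hfa : ∀ a b c : X, a ⊓ b = 0 → 0 ≤ c → (c * a) ⊓ b = 0)
    (comp : X → X)
    (hcomp : ∀ x : X, 0 ≤ x → IsLUB (Set.range fun n : ℕ => 1 ⊓ (n • x)) (comp x))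
    (pinv : X → X)
    (hpinv : ∀ x : X, 0 ≤ x → 0 ≤ pinv x ∧
      (∀ y : X, 0 ≤ y → x ⊓ y = 0 → pinv x ⊓ y = 0) ∧ x * pinv x = comp x)
    (x y : ℕ → X) (hxpos : ∀ n, 0 ≤ x n) (hypos : ∀ n, 0 ≤ y n)
    (bx by' : X) (hbx : ∀ n, x n ≤ bx) (hby : ∀ n, y n ≤ by')
    (l : X)
    (hconv : (⨅ m, ⨆ n : {n // m ≤ n}, x n.1) = l ∧
             (⨆ m, ⨅ n : {n // m ≤ n}, x n.1) = l) :
    (⨅ m, ⨆ n : {n // m ≤ n}, x n.1 * y n.1) =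
      l * (⨅ m, ⨆ n : {n // m ≤ n}, y n.1) ∧
    (⨆ m, ⨅ n : {n // m ≤ n}, x n.1 * y n.1) =
      l * (⨆ m, ⨅ n : {n // m ≤ n}, y n.1) := by
  obtain ⟨hconv1, hconv2⟩ := hconv
  have h01 : (0:X) ≤ 1 := uc_one_nonneg comp hcomp pinv hpinv
  have hby0 : 0 ≤ by' := (hypos 0).trans (hby 0)
  have hxy0 : ∀ n, 0 ≤ x n * y n := fun n => hmul _ _ (hxpos n) (hypos n)
  have hxy_le : ∀ n, x n * y n ≤ bx * by' := fun n =>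
    (uc_mulm hmul (hxpos n) (hby n)).trans (uc_mulm' hmul hby0 (hbx n))
  set U : ℕ → X := fun m => ⨆ n : {n // m ≤ n}, x n.1 with hUd
  set V : ℕ → X := fun m => ⨅ n : {n // m ≤ n}, x n.1 with hVd
  set Y : ℕ → X := fun m => ⨆ n : {n // m ≤ n}, y n.1 with hYd
  set Z : ℕ → X := fun m => ⨅ n : {n // m ≤ n}, y n.1 with hZd
  set S : ℕ → X := fun m => ⨆ n : {n // m ≤ n}, x n.1 * y n.1 with hSd
  set I : ℕ → X := fun m => ⨅ n : {n // m ≤ n}, x n.1 * y n.1 with hId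
  -- bounded ranges over tails
  have bddU : ∀ m : ℕ, BddAbove (Set.range fun n : {n // m ≤ n} => x n.1) :=
    fun m => ⟨bx, by rintro _ ⟨n, rfl⟩; exact hbx _⟩
  have bddY : ∀ m : ℕ, BddAbove (Set.range fun n : {n // m ≤ n} => y n.1) :=
    fun m => ⟨by', by rintro _ ⟨n, rfl⟩; exact hby _⟩
  have bddS : ∀ m : ℕ, BddAbove (Set.range fun n : {n // m ≤ n} => x n.1 * y n.1) :=
    fun m => ⟨bx * by', by rintro _ ⟨n, rfl⟩; exact hxy_le _⟩
  have bddlV : ∀ m : ℕ, BddBelow (Set.range fun n : {n // m ≤ n} => x n.1) :=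
    fun m => ⟨0, by rintro _ ⟨n, rfl⟩; exact hxpos _⟩
  have bddlZ : ∀ m : ℕ, BddBelow (Set.range fun n : {n // m ≤ n} => y n.1) :=
    fun m => ⟨0, by rintro _ ⟨n, rfl⟩; exact hypos _⟩
  have bddlI : ∀ m : ℕ, BddBelow (Set.range fun n : {n // m ≤ n} => x n.1 * y n.1) :=
    fun m => ⟨0, by rintro _ ⟨n, rfl⟩; exact hxy0 _⟩
  -- accessors
  have hUge : ∀ m n, m ≤ n → x n ≤ U m := fun m n h => le_ciSup (bddU m) ⟨n, h⟩
  have hUle : ∀ m t, (∀ n, m ≤ n → x n ≤ t) → U m ≤ t := fun m t ht =>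
    ciSup_le fun n => ht n.1 n.2
  have hYge : ∀ m n, m ≤ n → y n ≤ Y m := fun m n h => le_ciSup (bddY m) ⟨n, h⟩
  have hYle : ∀ m t, (∀ n, m ≤ n → y n ≤ t) → Y m ≤ t := fun m t ht =>
    ciSup_le fun n => ht n.1 n.2
  have hSge : ∀ m n, m ≤ n → x n * y n ≤ S m := fun m n h => le_ciSup (bddS m) ⟨n, h⟩
  have hSle : ∀ m t, (∀ n, m ≤ n → x n * y n ≤ t) → S m ≤ t := fun m t ht =>
    ciSup_le fun n => ht n.1 n.2
  have hVle : ∀ m n, m ≤ n → V m ≤ x n := fun m n h => ciInf_le (bddlV m) ⟨n, h⟩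
  have hVge : ∀ m t, (∀ n, m ≤ n → t ≤ x n) → t ≤ V m := fun m t ht =>
    le_ciInf fun n => ht n.1 n.2
  have hZle : ∀ m n, m ≤ n → Z m ≤ y n := fun m n h => ciInf_le (bddlZ m) ⟨n, h⟩
  have hZge : ∀ m t, (∀ n, m ≤ n → t ≤ y n) → t ≤ Z m := fun m t ht =>
    le_ciInf fun n => ht n.1 n.2
  have hIle : ∀ m n, m ≤ n → I m ≤ x n * y n := fun m n h => ciInf_le (bddlI m) ⟨n, h⟩
  have hIge : ∀ m t, (∀ n, m ≤ n → t ≤ x n * y n) → t ≤ I m := fun m t ht =>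
    le_ciInf fun n => ht n.1 n.2
  -- positivity and monotonicity
  have hU0 : ∀ m, 0 ≤ U m := fun m => (hxpos m).trans (hUge m m le_rfl)
  have hV0 : ∀ m, 0 ≤ V m := fun m => hVge m 0 fun n _ => hxpos n
  have hY0 : ∀ m, 0 ≤ Y m := fun m => (hypos m).trans (hYge m m le_rfl)
  have hZ0 : ∀ m, 0 ≤ Z m := fun m => hZge m 0 fun n _ => hypos n
  have hS0 : ∀ m, 0 ≤ S m := fun m => (hxy0 m).trans (hSge m m le_rfl)
  have hI0 : ∀ m, 0 ≤ I m := fun m => hIge m 0 fun n _ => hxy0 n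
  have hUanti : ∀ k m, k ≤ m → U m ≤ U k := fun k m h =>
    hUle m _ fun n hn => hUge k n (h.trans hn)
  have hVmono : ∀ k m, k ≤ m → V k ≤ V m := fun k m h =>
    hVge m _ fun n hn => hVle k n (h.trans hn)
  have hYanti : ∀ k m, k ≤ m → Y m ≤ Y k := fun k m h =>
    hYle m _ fun n hn => hYge k n (h.trans hn)
  have hZmono : ∀ k m, k ≤ m → Z k ≤ Z m := fun k m h =>
    hZge m _ fun n hn => hZle k n (h.trans hn)
  have hSanti : ∀ k m, k ≤ m → S m ≤ S k := fun k m h =>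
    hSle m _ fun n hn => hSge k n (h.trans hn)
  have hImono : ∀ k m, k ≤ m → I k ≤ I m := fun k m h =>
    hIge m _ fun n hn => hIle k n (h.trans hn)
  -- outer bounds
  have bddoU : BddBelow (Set.range U) := ⟨0, by rintro _ ⟨m, rfl⟩; exact hU0 m⟩
  have bddoV : BddAbove (Set.range V) :=
    ⟨bx, by rintro _ ⟨m, rfl⟩; exact (hVle m m le_rfl).trans (hbx m)⟩
  have bddoY : BddBelow (Set.range Y) := ⟨0, by rintro _ ⟨m, rfl⟩; exact hY0 m⟩
  have bddoZ : BddAbove (Set.range Z) :=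
    ⟨by', by rintro _ ⟨m, rfl⟩; exact (hZle m m le_rfl).trans (hby m)⟩
  have bddoS : BddBelow (Set.range S) := ⟨0, by rintro _ ⟨m, rfl⟩; exact hS0 m⟩
  have bddoI : BddAbove (Set.range I) :=
    ⟨bx * by', by rintro _ ⟨m, rfl⟩; exact (hIle m m le_rfl).trans (hxy_le m)⟩
  -- master LUB/GLB facts
  have hglbU : IsGLB (Set.range U) l := by
    have h := isGLB_ciInf bddoU
    rwa [hconv1] at h
  have hlubV : IsLUB (Set.range V) l := by
    have h := isLUB_ciSup bddoV
    rwa [hconv2] at h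
  have hglbY : IsGLB (Set.range Y) (⨅ m, Y m) := isGLB_ciInf bddoY
  have hlubZ : IsLUB (Set.range Z) (⨆ m, Z m) := isLUB_ciSup bddoZ
  have hlubYm : ∀ m, IsLUB (Set.range fun n : {n // m ≤ n} => y n.1) (Y m) :=
    fun m => isLUB_ciSup (bddY m)
  have hglbZm : ∀ m, IsGLB (Set.range fun n : {n // m ≤ n} => y n.1) (Z m) :=
    fun m => isGLB_ciInf (bddlZ m)
  have hl0 : 0 ≤ l := (hV0 0).trans (hlubV.1 ⟨0, rfl⟩)
  have hL0 : 0 ≤ ⨅ m, Y m := le_ciInf fun m => hY0 m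
  have hZs0 : 0 ≤ ⨆ m, Z m := (hZ0 0).trans (hlubZ.1 ⟨0, rfl⟩)
  have hglbUtail : ∀ k, IsGLB (Set.range fun j : ℕ => U (k + j)) l := by
    intro k
    constructor
    · rintro _ ⟨j, rfl⟩; exact hglbU.1 ⟨k + j, rfl⟩
    · intro t ht
      refine hglbU.2 ?_
      rintro _ ⟨m, rfl⟩
      calc t ≤ U (k + m) := ht ⟨m, rfl⟩
        _ ≤ U m := hUanti m (k + m) (Nat.le_add_left m k)
  -- Part A
  have hAle : (⨅ m, S m) ≤ l * (⨅ m, Y m) := by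
    have hstep : ∀ k, (⨅ m, S m) ≤ Y k * l := by
      intro k
      have hglb2 : IsGLB (Set.range fun j : ℕ => Y k * U (k + j)) (Y k * l) :=
        uc_isGLB_mul hmul hfa h01 comp hcomp pinv hpinv (hY0 k) _
          (fun j => hU0 _) (hglbUtail k)
      refine hglb2.2 ?_
      rintro _ ⟨j, rfl⟩
      calc (⨅ m, S m) ≤ S (k + j) := ciInf_le bddoS (k + j)
        _ ≤ U (k + j) * Y (k + j) := by
            refine hSle (k + j) _ fun n hn => ?_
            calc x n * y n ≤ x n * Y (k + j) := uc_mulm hmul (hxpos n) (hYge (k + j) n hn)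
              _ ≤ U (k + j) * Y (k + j) := uc_mulm' hmul (hY0 (k + j)) (hUge (k + j) n hn)
        _ ≤ U (k + j) * Y k := uc_mulm hmul (hU0 _) (hYanti k (k + j) (Nat.le_add_right k j))
        _ = Y k * U (k + j) := mul_comm _ _
    have hglb3 : IsGLB (Set.range fun k => l * Y k) (l * (⨅ m, Y m)) :=
      uc_isGLB_mul hmul hfa h01 comp hcomp pinv hpinv hl0 Y hY0 hglbY
    refine hglb3.2 ?_
    rintro _ ⟨k, rfl⟩
    exact (hstep k).trans_eq (mul_comm _ _)
  have hAge : l * (⨅ m, Y m) ≤ ⨅ m, S m := by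
    refine le_ciInf fun m => ?_
    have hlub4 : IsLUB (Set.range fun k => (⨅ m', Y m') * V k) ((⨅ m', Y m') * l) :=
      uc_isLUB_mul hmul hfa h01 comp hcomp pinv hpinv hL0 V hV0 hlubV
    have hmain : (⨅ m', Y m') * l ≤ S m := by
      refine hlub4.2 ?_
      rintro _ ⟨k, rfl⟩
      have hS5 : V (max k m) * Y (max k m) ≤ S (max k m) := by
        have hlub5 : IsLUB (Set.range fun n : {n // max k m ≤ n} => V (max k m) * y n.1)
            (V (max k m) * Y (max k m)) :=
          uc_isLUB_mul hmul hfa h01 comp hcomp pinv hpinv (hV0 _) _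
            (fun n => hypos _) (hlubYm _)
        refine hlub5.2 ?_
        rintro _ ⟨n, rfl⟩
        calc V (max k m) * y n.1 ≤ x n.1 * y n.1 :=
              uc_mulm' hmul (hypos _) (hVle _ n.1 n.2)
          _ ≤ S (max k m) := hSge _ n.1 n.2
      calc (⨅ m', Y m') * V k = V k * (⨅ m', Y m') := mul_comm _ _
        _ ≤ V (max k m) * (⨅ m', Y m') := uc_mulm' hmul hL0 (hVmono k _ (le_max_left k m))
        _ ≤ V (max k m) * Y (max k m) := uc_mulm hmul (hV0 _) (ciInf_le bddoY (max k m))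
        _ ≤ S (max k m) := hS5
        _ ≤ S m := hSanti m _ (le_max_right k m)
    calc l * (⨅ m', Y m') = (⨅ m', Y m') * l := mul_comm _ _
      _ ≤ S m := hmain
  -- Part B
  have hBge : l * (⨆ m, Z m) ≤ ⨆ m, I m := by
    have hlub6 : IsLUB (Set.range fun k => l * Z k) (l * (⨆ m, Z m)) :=
      uc_isLUB_mul hmul hfa h01 comp hcomp pinv hpinv hl0 Z hZ0 hlubZ
    refine hlub6.2 ?_
    rintro _ ⟨k, rfl⟩
    have hlub7 : IsLUB (Set.range fun m => Z k * V m) (Z k * l) :=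
      uc_isLUB_mul hmul hfa h01 comp hcomp pinv hpinv (hZ0 k) V hV0 hlubV
    have hmain : Z k * l ≤ ⨆ m, I m := by
      refine hlub7.2 ?_
      rintro _ ⟨m, rfl⟩
      have hstep2 : V (max m k) * Z (max m k) ≤ I (max m k) := by
        refine hIge _ _ fun n hn => ?_
        calc V (max m k) * Z (max m k) ≤ V (max m k) * y n :=
              uc_mulm hmul (hV0 _) (hZle _ n hn)
          _ ≤ x n * y n := uc_mulm' hmul (hypos n) (hVle _ n hn)
      calc Z k * V m = V m * Z k := mul_comm _ _
        _ ≤ V (max m k) * Z k := uc_mulm' hmul (hZ0 k) (hVmono m _ (le_max_left m k))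
        _ ≤ V (max m k) * Z (max m k) := uc_mulm hmul (hV0 _) (hZmono k _ (le_max_right m k))
        _ ≤ I (max m k) := hstep2
        _ ≤ ⨆ m', I m' := le_ciSup bddoI _
    exact (mul_comm l (Z k)).trans_le hmain
  have hBle : (⨆ m, I m) ≤ l * (⨆ m, Z m) := by
    refine ciSup_le fun m => ?_
    have hglb8 : IsGLB (Set.range fun k => (⨆ m', Z m') * U k) ((⨆ m', Z m') * l) :=
      uc_isGLB_mul hmul hfa h01 comp hcomp pinv hpinv hZs0 U hU0 hglbU
    have hmain : I m ≤ (⨆ m', Z m') * l := by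
      refine hglb8.2 ?_
      rintro _ ⟨k, rfl⟩
      have hglb9 : IsGLB (Set.range fun n : {n // max m k ≤ n} => U (max m k) * y n.1)
          (U (max m k) * Z (max m k)) :=
        uc_isGLB_mul hmul hfa h01 comp hcomp pinv hpinv (hU0 _) _
          (fun n => hypos _) (hglbZm _)
      have hstep3 : I (max m k) ≤ U (max m k) * Z (max m k) := by
        refine hglb9.2 ?_
        rintro _ ⟨n, rfl⟩
        calc I (max m k) ≤ x n.1 * y n.1 := hIle _ n.1 n.2
          _ ≤ U (max m k) * y n.1 := uc_mulm' hmul (hypos _) (hUge _ n.1 n.2)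
      calc I m ≤ I (max m k) := hImono m _ (le_max_left m k)
        _ ≤ U (max m k) * Z (max m k) := hstep3
        _ ≤ U (max m k) * (⨆ m', Z m') := uc_mulm hmul (hU0 _) (le_ciSup bddoZ _)
        _ ≤ U k * (⨆ m', Z m') := uc_mulm' hmul hZs0 (hUanti k _ (le_max_right m k))
        _ = (⨆ m', Z m') * U k := mul_comm _ _
    exact hmain.trans_eq (mul_comm _ _)
  exact ⟨le_antisymm hAle hAge, le_antisymm hBle hBge⟩
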